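/- (Lemma 2(v)) Let α < β, let (b_m)_{m≥1} be positive reals with lim_{m→∞} b_m²/m = 0, and let φ₁, φ₂ : ℝ → ℝ be bounded, uniformly continuous functions with φ₁(x) < φ₂(x) for all x ∈ ℝ. For each m ≥ 1 let m_k^{(m)} ≥ 1 (0 ≤ k ≤ m) be positive integers such that min_{0 ≤ k ≤ m} m_k^{(m)} → ∞ as m → ∞. Let J_m = [α b_m, β b_m] and Δ_m = {(x,y) : α b_m ≤ x ≤ β b_m, φ₁(x) ≤ y ≤ φ₂(x)}. Then the bivariate shifted Bernstein–Chlodowsky–Stancu operators applied to the function (x,y) ↦ y² converge to y² uniformly: sup_{(x,y) ∈ Δ_m} |B̃_m^{Cl}[y²; Δ_m](x, y) − y²| → 0 as m → ∞. -/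

import Mathlib

/-!
Write `x = αb + (β - α) b u` and `y = φ₁ x + (φ₂ x - φ₁ x) v` with `u, v ∈ [0, 1]`. Both basis
families are then ordinary Bernstein polynomials in `u` and `v`, and for `g = y²` the inner sum over
`j` is the Bernstein operator of a quadratic in `j / m_k`; by the first two Bernstein moments it
equals `s_k² + D_k² v (1 - v) / m_k`, where `D_k = φ₂ ξ_k - φ₁ ξ_k` and
`s_k = φ₁ ξ_k + D_k v` at the node `ξ_k = αb + (β - α) b k / m`. The remainder term is at most
`C² / min_k m_k`. A bounded uniformly continuous `φ` satisfies
`|φ z - φ x| ≤ ε + K (z - x)²` for every `ε > 0` and some `K`, so `|s_k² - y²|` is at most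
`2C (ε + K (ξ_k - x)²)`, and the variance of the outer Bernstein weights turns `(ξ_k - x)²` into
`(β - α)² b² u (1 - u) / m ≤ (β - α)² b² / (4m)`, which tends to `0` because `b_m² / m → 0`.
-/

open Finset Filter Real

/-- Shifted Bernstein–Chlodowsky basis polynomial on `J = [αb, βb]`. -/
noncomputable def qt (α β b : ℝ) (m k : ℕ) (x : ℝ) : ℝ :=
  (1 / ((β - α) ^ m * b ^ m)) * (m.choose k : ℝ) * (x - α * b) ^ k * (β * b - x) ^ (m - k)

/-- Basis polynomial `q̃_{n,j}(y; [φ₁(x), φ₂(x)])`. -/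
noncomputable def qy (φ₁ φ₂ : ℝ → ℝ) (x : ℝ) (n j : ℕ) (y : ℝ) : ℝ :=
  (n.choose j : ℝ) * ((y - φ₁ x) / (φ₂ x - φ₁ x)) ^ j *
    ((φ₂ x - y) / (φ₂ x - φ₁ x)) ^ (n - j)

/-- Bivariate shifted Bernstein–Chlodowsky–Stancu operator on the domain `Δ`
bounded by `y = φ₁(x)`, `y = φ₂(x)`, `x = αb`, `x = βb`. -/
noncomputable def BivCl (α β b : ℝ) (φ₁ φ₂ : ℝ → ℝ) (m : ℕ) (mk : ℕ → ℕ)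
    (g : ℝ → ℝ → ℝ) (x y : ℝ) : ℝ :=
  ∑ k ∈ Finset.range (m + 1), ∑ j ∈ Finset.range (mk k + 1),
    g ((β - α) * b * ((k : ℝ) / m) + α * b)
      ((φ₂ ((β - α) * b * ((k : ℝ) / m) + α * b) - φ₁ ((β - α) * b * ((k : ℝ) / m) + α * b)) *
          ((j : ℝ) / mk k) + φ₁ ((β - α) * b * ((k : ℝ) / m) + α * b)) *
      qt α β b m k x * qy φ₁ φ₂ x (mk k) j y

namespace bernsteinPolynomial

open Polynomial

theorem sum_eval {R : Type*} [CommRing R] (n : ℕ) (t : R) :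
    ∑ k ∈ range (n + 1), (bernsteinPolynomial R n k).eval t = 1 := by
  simpa [eval_finsetSum] using congrArg (eval t) (bernsteinPolynomial.sum R n)

section Field

variable {R : Type*} [Field R] [CharZero R]

theorem sum_div_mul_eval {n : ℕ} (hn : n ≠ 0) (t : R) :
    ∑ k ∈ range (n + 1), (k / n : R) * (bernsteinPolynomial R n k).eval t = t := by
  have h := congrArg (eval t) (bernsteinPolynomial.sum_smul R n)
  simp only [eval_finsetSum, nsmul_eq_mul, eval_mul, eval_natCast, eval_X] at h
  simp_rw [div_mul_eq_mul_div, ← sum_div, h]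
  field_simp

theorem sum_sub_div_sq_mul_eval {n : ℕ} (hn : n ≠ 0) (t : R) :
    ∑ k ∈ range (n + 1), (t - k / n) ^ 2 * (bernsteinPolynomial R n k).eval t =
      t * (1 - t) / n := by
  have h := congrArg (eval t) (bernsteinPolynomial.variance R n)
  simp only [eval_finsetSum, eval_mul, eval_pow, eval_sub, nsmul_eq_mul, eval_X,
    eval_one, eval_natCast] at h
  have hn' : (n : R) ≠ 0 := Nat.cast_ne_zero.mpr hn
  rw [eq_div_iff hn', sum_mul]
  calc _ = (∑ k ∈ range (n + 1), (n * t - k) ^ 2 * (bernsteinPolynomial R n k).eval t) / n := by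
        rw [sum_div]; refine sum_congr rfl fun k _ => ?_; field_simp
    _ = _ := by rw [h]; field_simp

theorem sum_mul_div_add_sq_mul_eval {n : ℕ} (hn : n ≠ 0) (D A t : R) :
    ∑ k ∈ range (n + 1), (D * (k / n) + A) ^ 2 * (bernsteinPolynomial R n k).eval t =
      (D * t + A) ^ 2 + D ^ 2 * (t * (1 - t) / n) := by
  have expand : ∀ k : ℕ, (D * (k / n) + A) ^ 2 =
      (D * t + A) ^ 2 + 2 * D * (D * t + A) * (k / n : R) - 2 * D * (D * t + A) * t
        + D ^ 2 * (t - k / n) ^ 2 := fun k => by ring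
  simp only [expand, add_mul, sub_mul, sum_add_distrib, sum_sub_distrib, mul_assoc, ← mul_sum,
    sum_eval, sum_div_mul_eval hn, sum_sub_div_sq_mul_eval hn]
  ring

end Field

theorem eval_nonneg (n k : ℕ) {t : ℝ} (ht : t ∈ Set.Icc 0 1) :
    0 ≤ (bernsteinPolynomial ℝ n k).eval t := by
  have : 0 ≤ 1 - t := sub_nonneg.mpr ht.2
  have := ht.1
  simp only [bernsteinPolynomial, eval_mul, eval_pow, eval_sub, eval_one, eval_X, eval_natCast]
  positivity

theorem abs_sum_mul_eval_sub_le {n : ℕ} (hn : n ≠ 0) {t : ℝ} (ht : t ∈ Set.Icc 0 1)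
    {F : ℕ → ℝ} {c ε K : ℝ} (hF : ∀ k ≤ n, |F k - c| ≤ ε + K * (t - k / n) ^ 2) :
    |∑ k ∈ range (n + 1), F k * (bernsteinPolynomial ℝ n k).eval t - c| ≤
      ε + K * (t * (1 - t) / n) := by
  calc _ = |∑ k ∈ range (n + 1), (F k - c) * (bernsteinPolynomial ℝ n k).eval t| := by
        simp_rw [sub_mul, sum_sub_distrib, ← mul_sum, sum_eval, mul_one]
    _ ≤ ∑ k ∈ range (n + 1), |F k - c| * (bernsteinPolynomial ℝ n k).eval t := by
        refine (abs_sum_le_sum_abs _ _).trans_eq (sum_congr rfl fun k _ => ?_)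
        rw [abs_mul, abs_of_nonneg (eval_nonneg n k ht)]
    _ ≤ ∑ k ∈ range (n + 1), (ε + K * (t - k / n) ^ 2) * (bernsteinPolynomial ℝ n k).eval t :=
        sum_le_sum fun k hk => mul_le_mul_of_nonneg_right
          (hF k (Nat.lt_succ_iff.mp (mem_range.mp hk))) (eval_nonneg n k ht)
    _ = ε + K * (t * (1 - t) / n) := by
        simp only [add_mul, mul_assoc, sum_add_distrib, ← mul_sum, sum_eval,
          sum_sub_div_sq_mul_eval hn, mul_one]

end bernsteinPolynomial

theorem abs_sub_mul_add_le {a₁ a₂ v C : ℝ} (hv : v ∈ Set.Icc 0 1) (h₁ : |a₁| ≤ C)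
    (h₂ : |a₂| ≤ C) : |(a₂ - a₁) * v + a₁| ≤ C := by
  obtain ⟨hv₀, hv₁⟩ := hv
  rw [abs_le] at *
  constructor <;> nlinarith

theorem abs_sq_sub_sq_le {a c C : ℝ} (ha : |a| ≤ C) (hc : |c| ≤ C) :
    |a ^ 2 - c ^ 2| ≤ 2 * C * |a - c| := by
  rw [sq_sub_sq, abs_mul]
  exact mul_le_mul_of_nonneg_right ((abs_add_le a c).trans (by linarith)) (abs_nonneg _)

theorem abs_sub_mul_add_sq_add_sub_sq_le {a₁ a₂ c₁ c₂ v C e : ℝ} {n₀ n : ℕ}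
    (hv : v ∈ Set.Icc 0 1) (ha₁ : |a₁| ≤ C) (ha₂ : |a₂| ≤ C) (hc₁ : |c₁| ≤ C) (hc₂ : |c₂| ≤ C)
    (h₁ : |a₁ - c₁| ≤ e) (h₂ : |a₂ - c₂| ≤ e) (hn₀ : 0 < n₀) (hn : n₀ ≤ n) :
    |((a₂ - a₁) * v + a₁) ^ 2 + (a₂ - a₁) ^ 2 * (v * (1 - v) / n) - ((c₂ - c₁) * v + c₁) ^ 2|
      ≤ 2 * C * e + C ^ 2 / n₀ := by
  have hdiff : ((a₂ - a₁) * v + a₁) - ((c₂ - c₁) * v + c₁) =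
      ((a₂ - c₂) - (a₁ - c₁)) * v + (a₁ - c₁) := by ring
  have hmain : |((a₂ - a₁) * v + a₁) ^ 2 - ((c₂ - c₁) * v + c₁) ^ 2| ≤ 2 * C * e := by
    refine (abs_sq_sub_sq_le (abs_sub_mul_add_le hv ha₁ ha₂)
      (abs_sub_mul_add_le hv hc₁ hc₂)).trans ?_
    have : 0 ≤ C := (abs_nonneg _).trans ha₁
    rw [hdiff]
    gcongr
    exact abs_sub_mul_add_le hv h₁ h₂
  have hv₀ : 0 ≤ v * (1 - v) / n := by
    have := hv.1; have := sub_nonneg.mpr hv.2; positivity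
  have hrem₀ : 0 ≤ (a₂ - a₁) ^ 2 * (v * (1 - v) / n) := by positivity
  have hrem : (a₂ - a₁) ^ 2 * (v * (1 - v) / n) ≤ C ^ 2 / n₀ := by
    have hsq : (a₂ - a₁) ^ 2 ≤ (2 * C) ^ 2 := by
      rw [← sq_abs]
      gcongr
      exact (abs_sub _ _).trans (by linarith)
    have hv4 : v * (1 - v) ≤ 1 / 4 := by nlinarith [sq_nonneg (2 * v - 1)]
    have hn₀' : (0 : ℝ) < n₀ := by exact_mod_cast hn₀
    calc _ ≤ (2 * C) ^ 2 * (1 / 4 / n) := by gcongr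
      _ = C ^ 2 / n := by ring
      _ ≤ C ^ 2 / n₀ := by gcongr
  rw [add_sub_right_comm]
  refine (abs_add_le _ _).trans ?_
  rw [abs_of_nonneg hrem₀]
  linarith

theorem UniformContinuous.eventually_abs_sub_le_add_mul_sq {f : ℝ → ℝ} (hf : UniformContinuous f)
    {C : ℝ} (hC : ∀ x, |f x| ≤ C) {ε : ℝ} (hε : 0 < ε) :
    ∀ᶠ K in atTop, ∀ z x, |f z - f x| ≤ ε + K * (z - x) ^ 2 := by
  obtain ⟨δ, hδ, hfδ⟩ := Metric.uniformContinuous_iff.mp hf ε hε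
  have hC₀ : 0 ≤ C := (abs_nonneg _).trans (hC 0)
  filter_upwards [eventually_ge_atTop (2 * C / δ ^ 2)] with K hK z x
  have hK₀ : 0 ≤ K := (by positivity : 0 ≤ 2 * C / δ ^ 2).trans hK
  rcases lt_or_ge (dist z x) δ with hzx | hzx
  · have := (hfδ hzx).le
    rw [Real.dist_eq] at this
    nlinarith [sq_nonneg (z - x)]
  · rw [Real.dist_eq] at hzx
    have hδsq : δ ^ 2 ≤ (z - x) ^ 2 := by
      rw [← sq_abs (z - x)]; gcongr
    have hbound : |f z - f x| ≤ 2 * C := (abs_sub _ _).trans (by linarith [hC z, hC x])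
    have : 2 * C ≤ K * (z - x) ^ 2 := by
      calc 2 * C = 2 * C / δ ^ 2 * δ ^ 2 := by field_simp
        _ ≤ K * (z - x) ^ 2 := by gcongr
    linarith

theorem qt_eq_eval_bernsteinPolynomial {α β b : ℝ} (h : (β - α) * b ≠ 0) {m k : ℕ} (hk : k ≤ m)
    (x : ℝ) : qt α β b m k x = (bernsteinPolynomial ℝ m k).eval ((x - α * b) / ((β - α) * b)) := by
  have h₁ : 1 - (x - α * b) / ((β - α) * b) = (β * b - x) / ((β - α) * b) := by
    rw [eq_div_iff h, sub_mul, div_mul_cancel₀ _ h]; ring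
  simp only [qt, bernsteinPolynomial, Polynomial.eval_mul, Polynomial.eval_pow,
    Polynomial.eval_sub, Polynomial.eval_one, Polynomial.eval_X, Polynomial.eval_natCast, h₁,
    div_pow, ← mul_pow, ← pow_mul_pow_sub ((β - α) * b) hk]
  field_simp

theorem qy_eq_eval_bernsteinPolynomial {φ₁ φ₂ : ℝ → ℝ} {x : ℝ} (h : φ₁ x ≠ φ₂ x) (n j : ℕ)
    (y : ℝ) : qy φ₁ φ₂ x n j y = (bernsteinPolynomial ℝ n j).eval ((y - φ₁ x) / (φ₂ x - φ₁ x)) := by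
  have h₁ : (φ₂ x - y) / (φ₂ x - φ₁ x) = 1 - (y - φ₁ x) / (φ₂ x - φ₁ x) := by
    field_simp [sub_ne_zero.mpr h.symm]; ring
  simp [qy, bernsteinPolynomial, h₁]

noncomputable def chlodowskyNode (α β b : ℝ) (m k : ℕ) : ℝ := (β - α) * b * ((k : ℝ) / m) + α * b

theorem BivCl_sq_eq {α β b : ℝ} (hL : (β - α) * b ≠ 0) {φ₁ φ₂ : ℝ → ℝ} {m : ℕ} {mk : ℕ → ℕ}
    (hmk : ∀ k ≤ m, mk k ≠ 0) {x y u v : ℝ} (hφ : φ₁ x ≠ φ₂ x)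
    (hx : x = (β - α) * b * u + α * b) (hy : y = (φ₂ x - φ₁ x) * v + φ₁ x) :
    BivCl α β b φ₁ φ₂ m mk (fun _ t => t ^ 2) x y =
      ∑ k ∈ range (m + 1),
        (((φ₂ (chlodowskyNode α β b m k) - φ₁ (chlodowskyNode α β b m k)) * v +
            φ₁ (chlodowskyNode α β b m k)) ^ 2 +
          (φ₂ (chlodowskyNode α β b m k) - φ₁ (chlodowskyNode α β b m k)) ^ 2 *
            (v * (1 - v) / mk k)) * (bernsteinPolynomial ℝ m k).eval u := by
  have hu : (x - α * b) / ((β - α) * b) = u := by rw [div_eq_iff hL, hx]; ring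
  have hv : (y - φ₁ x) / (φ₂ x - φ₁ x) = v := by
    rw [div_eq_iff (sub_ne_zero.mpr hφ.symm), hy]; ring
  rw [BivCl]
  refine sum_congr rfl fun k hk => ?_
  have hkm : k ≤ m := Nat.lt_succ_iff.mp (mem_range.mp hk)
  simp only [qt_eq_eval_bernsteinPolynomial hL hkm, qy_eq_eval_bernsteinPolynomial hφ, hu, hv,
    mul_right_comm _ ((bernsteinPolynomial ℝ m k).eval u), ← sum_mul,
    bernsteinPolynomial.sum_mul_div_add_sq_mul_eval (hmk k hkm)]
  rfl

theorem abs_BivCl_sq_sub_sq_le {α β b C ε K : ℝ} (hαβ : α < β) (hb : 0 < b) {φ₁ φ₂ : ℝ → ℝ}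
    (hC₁ : ∀ x, |φ₁ x| ≤ C) (hC₂ : ∀ x, |φ₂ x| ≤ C) (hK : 0 ≤ K)
    (h₁ : ∀ z x, |φ₁ z - φ₁ x| ≤ ε + K * (z - x) ^ 2)
    (h₂ : ∀ z x, |φ₂ z - φ₂ x| ≤ ε + K * (z - x) ^ 2)
    {m n₀ : ℕ} (hm : m ≠ 0) (hn₀ : 0 < n₀) {mk : ℕ → ℕ} (hmk : ∀ k ≤ m, n₀ ≤ mk k)
    {x y : ℝ} (hx : x ∈ Set.Icc (α * b) (β * b)) (hφ : φ₁ x < φ₂ x)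
    (hy : y ∈ Set.Icc (φ₁ x) (φ₂ x)) :
    |BivCl α β b φ₁ φ₂ m mk (fun _ t => t ^ 2) x y - y ^ 2| ≤
      2 * C * ε + C ^ 2 / n₀ + C * K * (β - α) ^ 2 * (b ^ 2 / m) / 2 := by
  set L := (β - α) * b with hL_def
  have hL : 0 < L := mul_pos (sub_pos.mpr hαβ) hb
  set u := (x - α * b) / L
  have hu : u ∈ Set.Icc 0 1 := by
    constructor
    · exact div_nonneg (by linarith [hx.1]) hL.le
    · rw [div_le_one hL]; linarith [hx.2]
  have hxu : x = L * u + α * b := by simp only [u]; field_simp; ring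
  set v := (y - φ₁ x) / (φ₂ x - φ₁ x)
  have hD : 0 < φ₂ x - φ₁ x := sub_pos.mpr hφ
  have hv : v ∈ Set.Icc 0 1 := by
    constructor
    · exact div_nonneg (by linarith [hy.1]) hD.le
    · rw [div_le_one hD]; linarith [hy.2]
  have hyv : y = (φ₂ x - φ₁ x) * v + φ₁ x := by simp only [v]; field_simp; ring
  have hnode : ∀ k : ℕ, chlodowskyNode α β b m k - x = L * (k / m - u) := fun k => by
    rw [chlodowskyNode, hxu]; ring
  have hC : 0 ≤ C := (abs_nonneg _).trans (hC₁ 0)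
  rw [BivCl_sq_eq hL.ne' (fun k hk => (hn₀.trans_le (hmk k hk)).ne') hφ.ne hxu hyv]
  calc _ ≤ (2 * C * ε + C ^ 2 / n₀) + 2 * C * K * L ^ 2 * (u * (1 - u) / m) := by
        refine bernsteinPolynomial.abs_sum_mul_eval_sub_le hm hu fun k hk => ?_
        have := abs_sub_mul_add_sq_add_sub_sq_le hv (hC₁ _) (hC₂ _) (hC₁ x) (hC₂ x)
          (h₁ (chlodowskyNode α β b m k) x) (h₂ _ x) hn₀ (hmk k hk)
        rw [← hyv, hnode] at this
        exact this.trans_eq (by ring)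
    _ ≤ (2 * C * ε + C ^ 2 / n₀) + 2 * C * K * L ^ 2 * (1 / 4 / m) := by
        have : u * (1 - u) ≤ 1 / 4 := by nlinarith [sq_nonneg (2 * u - 1)]
        gcongr
    _ = _ := by rw [hL_def]; ring

theorem stmt17_general (α β : ℝ) (hαβ : α < β) (b : ℕ → ℝ) (hb : ∀ m, 1 ≤ m → 0 < b m)
    (hlim : Filter.Tendsto (fun m : ℕ => (b m) ^ 2 / m) Filter.atTop (nhds 0))
    (φ₁ φ₂ : ℝ → ℝ)
    (hφ₁bdd : ∃ C, ∀ x, |φ₁ x| ≤ C) (hφ₂bdd : ∃ C, ∀ x, |φ₂ x| ≤ C)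
    (hφ₁u : UniformContinuous φ₁) (hφ₂u : UniformContinuous φ₂)
    (hφ : ∀ x, φ₁ x < φ₂ x)
    (mk : ℕ → ℕ → ℕ)
    (hmkmin : ∀ C : ℕ, ∃ N, ∀ m ≥ N, ∀ k ≤ m, C ≤ mk m k) :
    ∀ ε > 0, ∃ N, ∀ m ≥ N, 1 ≤ m →
      ∀ x ∈ Set.Icc (α * b m) (β * b m), ∀ y ∈ Set.Icc (φ₁ x) (φ₂ x),
        |BivCl α β (b m) φ₁ φ₂ m (mk m) (fun _ t => t ^ 2) x y - y ^ 2| < ε := by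
  intro ε hε
  obtain ⟨C₁, hC₁⟩ := hφ₁bdd
  obtain ⟨C₂, hC₂⟩ := hφ₂bdd
  obtain ⟨C, hφ₁C, hφ₂C⟩ : ∃ C, (∀ x, |φ₁ x| ≤ C) ∧ ∀ x, |φ₂ x| ≤ C :=
    ⟨max C₁ C₂, fun x => (hC₁ x).trans (le_max_left _ _),
      fun x => (hC₂ x).trans (le_max_right _ _)⟩
  have hC : 0 ≤ C := (abs_nonneg _).trans (hφ₁C 0)
  have hε₄ : 0 < ε / 4 := by positivity
  set ε₁ := ε / (8 * (C + 1))
  have hCε₁ : 2 * C * ε₁ ≤ ε / 4 := by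
    calc 2 * C * ε₁ ≤ 2 * (C + 1) * ε₁ := by gcongr; linarith
      _ = ε / 4 := by simp only [ε₁]; field_simp; ring
  obtain ⟨K, hK, hK₁, hK₂⟩ := ((eventually_ge_atTop 0).and
    ((hφ₁u.eventually_abs_sub_le_add_mul_sq hφ₁C (by positivity : 0 < ε₁)).and
      (hφ₂u.eventually_abs_sub_le_add_mul_sq hφ₂C (by positivity : 0 < ε₁)))).exists
  obtain ⟨n₀, hn₀, hCn₀⟩ := ((eventually_gt_atTop 0).and
    ((tendsto_const_div_atTop_nhds_zero_nat (C ^ 2)).eventually (gt_mem_nhds hε₄))).exists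
  obtain ⟨N₁, hN₁⟩ := hmkmin n₀
  have hlim' := (hlim.const_mul (C * K * (β - α) ^ 2)).div_const 2
  rw [mul_zero, zero_div] at hlim'
  obtain ⟨N₂, hN₂⟩ := eventually_atTop.mp (hlim'.eventually (gt_mem_nhds hε₄))
  refine ⟨max N₁ N₂, fun m hm hm₁ x hx y hy => ?_⟩
  calc _ ≤ 2 * C * ε₁ + C ^ 2 / n₀ + C * K * (β - α) ^ 2 * (b m ^ 2 / m) / 2 :=
        abs_BivCl_sq_sub_sq_le hαβ (hb m hm₁) hφ₁C hφ₂C hK hK₁ hK₂ (by omega) hn₀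
          (hN₁ m (le_of_max_le_left hm)) hx (hφ x) hy
    _ < ε := by linarith [hN₂ m (le_of_max_le_right hm)]

theorem stmt17 (α β : ℝ) (hαβ : α < β) (b : ℕ → ℝ) (hb : ∀ m, 1 ≤ m → 0 < b m)
    (hlim : Filter.Tendsto (fun m : ℕ => (b m) ^ 2 / m) Filter.atTop (nhds 0))
    (φ₁ φ₂ : ℝ → ℝ)
    (hφ₁bdd : ∃ C, ∀ x, |φ₁ x| ≤ C) (hφ₂bdd : ∃ C, ∀ x, |φ₂ x| ≤ C)
    (hφ₁u : UniformContinuous φ₁) (hφ₂u : UniformContinuous φ₂)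
    (hφ : ∀ x, φ₁ x < φ₂ x)
    (mk : ℕ → ℕ → ℕ) (hmk : ∀ m, ∀ k ≤ m, 1 ≤ mk m k)
    (hmkmin : ∀ C : ℕ, ∃ N, ∀ m ≥ N, ∀ k ≤ m, C ≤ mk m k) :
    ∀ ε > 0, ∃ N, ∀ m ≥ N, 1 ≤ m →
      ∀ x ∈ Set.Icc (α * b m) (β * b m), ∀ y ∈ Set.Icc (φ₁ x) (φ₂ x),
        |BivCl α β (b m) φ₁ φ₂ m (mk m) (fun _ t => t ^ 2) x y - y ^ 2| < ε :=
  stmt17_general α β hαβ b hb hlim φ₁ φ₂ hφ₁bdd hφ₂bdd hφ₁u hφ₂u hφ mk hmkmin
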